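/- The differential of the sixth iterate of the trace map T(x,y,z) = (2xy − z, x, y) at the point (0,0,a) equals the matrix [[16a⁴ − 4a² + 1, 8a³, 0], [8a³, 4a² + 1, 0], [0, 0, 1]]. -/

import Mathlib

/-! The orbit of `(0, 0, b)` under `T` is `(0,0,b) ↦ (-b,0,0) ↦ (0,-b,0) ↦ (0,0,-b)`, so by the
chain rule `DT³(0,0,b)` is the product of three explicit Jacobians, namely
`[[4b² - 1, 2b, 0], [-2b, -1, 0], [0, 0, -1]]`. Since `T³(0,0,a) = (0,0,-a)`, the Jacobian of
`T⁶ = T³ ∘ T³` at `(0,0,a)` is `DT³(0,0,-a) · DT³(0,0,a)`. -/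

open Matrix

def traceMap (v : Fin 3 → ℝ) : Fin 3 → ℝ :=
  ![2 * v 0 * v 1 - v 2, v 0, v 1]

theorem HasFDerivAt.comp_mulVecLin {𝕜 : Type*} [NontriviallyNormedField 𝕜] [CompleteSpace 𝕜]
    {l m n : Type*} [Fintype l] [Fintype m] [Fintype n]
    {f : (l → 𝕜) → m → 𝕜} {g : (m → 𝕜) → n → 𝕜}
    {A : Matrix m l 𝕜} {B : Matrix n m 𝕜} {C : Matrix n l 𝕜} {x : l → 𝕜}
    (hg : HasFDerivAt g (mulVecLin B).toContinuousLinearMap (f x))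
    (hf : HasFDerivAt f (mulVecLin A).toContinuousLinearMap x) (hC : B * A = C) :
    HasFDerivAt (g ∘ f) (mulVecLin C).toContinuousLinearMap x := by
  refine (hg.comp x hf).congr_fderiv ?_
  ext v : 1
  simp [← hC]

def traceJacobian (p : Fin 3 → ℝ) : Matrix (Fin 3) (Fin 3) ℝ :=
  !![2 * p 1, 2 * p 0, -1; 1, 0, 0; 0, 1, 0]

theorem hasFDerivAt_traceMap (p : Fin 3 → ℝ) :
    HasFDerivAt traceMap (mulVecLin (traceJacobian p)).toContinuousLinearMap p := by
  have h0 := hasFDerivAt_apply (𝕜 := ℝ) (F' := fun _ : Fin 3 => ℝ) 0 p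
  have h1 := hasFDerivAt_apply (𝕜 := ℝ) (F' := fun _ : Fin 3 => ℝ) 1 p
  have h2 := hasFDerivAt_apply (𝕜 := ℝ) (F' := fun _ : Fin 3 => ℝ) 2 p
  refine hasFDerivAt_pi'' fun i => ?_
  fin_cases i
  · refine (((h0.const_mul 2).mul h1).sub h2).congr_fderiv ?_
    ext w
    simp [traceJacobian, dotProduct, Fin.sum_univ_three]
    ring
  · exact h0.congr_fderiv (by ext w; simp [traceJacobian, dotProduct, Fin.sum_univ_three])
  · exact h1.congr_fderiv (by ext w; simp [traceJacobian, dotProduct, Fin.sum_univ_three])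

theorem traceMap_iterate_three (b : ℝ) : traceMap^[3] ![0, 0, b] = ![0, 0, -b] := by
  ext i
  fin_cases i <;> simp [traceMap]

theorem hasFDerivAt_traceMap_iterate_three (b : ℝ) :
    HasFDerivAt (traceMap^[3])
      (mulVecLin !![4 * b ^ 2 - 1, 2 * b, 0; -2 * b, -1, 0; 0, 0, -1]).toContinuousLinearMap
      ![0, 0, b] := by
  show HasFDerivAt (traceMap ∘ traceMap ∘ traceMap) _ _
  refine (hasFDerivAt_traceMap _).comp_mulVecLin
    ((hasFDerivAt_traceMap _).comp_mulVecLin (hasFDerivAt_traceMap _) rfl) ?_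
  ext i j
  fin_cases i <;> fin_cases j <;> simp [traceJacobian, traceMap]
  ring

theorem jacobian_sixth_iterate (a : ℝ) :
    HasFDerivAt (traceMap^[6])
      (LinearMap.toContinuousLinearMap
        (Matrix.mulVecLin
          !![16 * a ^ 4 - 4 * a ^ 2 + 1, 8 * a ^ 3, 0;
             8 * a ^ 3, 4 * a ^ 2 + 1, 0;
             0, 0, 1]))
      ![0, 0, a] := by
  rw [show traceMap^[6] = traceMap^[3] ∘ traceMap^[3] from Function.iterate_add _ 3 3]
  have h_second := hasFDerivAt_traceMap_iterate_three (-a)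
  rw [← traceMap_iterate_three a] at h_second
  refine h_second.comp_mulVecLin (hasFDerivAt_traceMap_iterate_three a) ?_
  ext i j
  fin_cases i <;> fin_cases j <;> simp <;> ring
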